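/- arXiv:2006.01178 — 5 statements merged into one kernel-verified Lean document; each statement's English description precedes it below -/
import Mathlib

section
/- Let (x̄, ȳ) ∈ D where D = {(x,y) : ∑_{i∈I} x_i = ∑_{j∈J} y_j, x_i ∈ [α'_i, β'_i], y_j ∈ [α''_j, β''_j]}. If there exists λ̄ ∈ ℝ such that for all i ∈ I: g_i(x̄,ȳ) ≥ λ̄ if x̄_i = α'_i, g_i(x̄,ȳ) = λ̄ if α'_i < x̄_i < β'_i, g_i(x̄,ȳ) ≤ λ̄ if x̄_i = β'_i, and for all j ∈ J: h_j(x̄,ȳ) ≤ λ̄ if ȳ_j = α''_j, h_j(x̄,ȳ) = λ̄ if α''_j < ȳ_j < β''_j, h_j(x̄,ȳ) ≥ λ̄ if ȳ_j = β''_j, then (x̄,ȳ) solves the variational inequality: ∑_{i∈I} g_i(x̄,ȳ)(x_i − x̄_i) − ∑_{j∈J} h_j(x̄,ȳ)(y_j − ȳ_j) ≥ 0 for all (x,y) ∈ D. -/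
/-!
The complementarity conditions say that each coordinate of `(xb, yb)` minimises
`t ↦ (g_i - lam) t` (resp. maximises `t ↦ (h_j - lam) t`) over its interval, so the variational
form is bounded below by `lam (∑ (x_i - xb_i) - ∑ (y_j - yb_j))`, which vanishes because both
points satisfy the balance equation.
-/

open Finset Set

theorem mul_sub_le_mul_sub_of_complementarity {a b xb x c lam : ℝ}
    (hxb : xb ∈ Icc a b) (hx : x ∈ Icc a b)
    (hlow : xb = a → lam ≤ c) (hint : a < xb → xb < b → c = lam) (hup : xb = b → c ≤ lam) :
    lam * (x - xb) ≤ c * (x - xb) := by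
  rcases hxb.1.eq_or_lt with ha | ha
  · exact mul_le_mul_of_nonneg_right (hlow ha.symm) (by linarith [hx.1])
  rcases hxb.2.eq_or_lt with hb | hb
  · exact mul_le_mul_of_nonpos_right (hup hb) (by linarith [hx.2])
  · rw [hint ha hb]

/-- equilibrium conditions imply the variational inequality (Prop 3.1 (a)). -/
theorem stmt_0 {I J : Type*} [Fintype I] [Fintype J]
    (α' β' : I → ℝ) (α'' β'' : J → ℝ)
    (g : I → (I → ℝ) → (J → ℝ) → ℝ) (h : J → (I → ℝ) → (J → ℝ) → ℝ)
    (D : Set ((I → ℝ) × (J → ℝ)))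
    (hD : D = {xy | ∑ i, xy.1 i = ∑ j, xy.2 j ∧
      (∀ i, xy.1 i ∈ Set.Icc (α' i) (β' i)) ∧ (∀ j, xy.2 j ∈ Set.Icc (α'' j) (β'' j))})
    (xb : I → ℝ) (yb : J → ℝ) (hmem : (xb, yb) ∈ D) (lam : ℝ)
    (hg1 : ∀ i, xb i = α' i → g i xb yb ≥ lam)
    (hg2 : ∀ i, α' i < xb i → xb i < β' i → g i xb yb = lam)
    (hg3 : ∀ i, xb i = β' i → g i xb yb ≤ lam)
    (hh1 : ∀ j, yb j = α'' j → h j xb yb ≤ lam)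
    (hh2 : ∀ j, α'' j < yb j → yb j < β'' j → h j xb yb = lam)
    (hh3 : ∀ j, yb j = β'' j → h j xb yb ≥ lam) :
    ∀ xy ∈ D, ∑ i, g i xb yb * (xy.1 i - xb i) - ∑ j, h j xb yb * (xy.2 j - yb j) ≥ 0 := by
  subst hD
  obtain ⟨hbalb, hxb, hyb⟩ := hmem
  rintro ⟨x, y⟩ ⟨hbal, hx, hy⟩
  have htraders : ∑ i, lam * (x i - xb i) ≤ ∑ i, g i xb yb * (x i - xb i) :=
    sum_le_sum fun i _ =>
      mul_sub_le_mul_sub_of_complementarity (hxb i) (hx i) (hg1 i) (hg2 i) (hg3 i)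
  -- buyers satisfy the complementarity conditions with the signs of `-h` and `-lam`
  have hbuyers : ∑ j, h j xb yb * (y j - yb j) ≤ ∑ j, lam * (y j - yb j) :=
    sum_le_sum fun j _ => by
      have := mul_sub_le_mul_sub_of_complementarity (c := -h j xb yb) (lam := -lam)
        (hyb j) (hy j) (fun e => neg_le_neg (hh1 j e))
        (fun h₁ h₂ => by rw [hh2 j h₁ h₂]) (fun e => neg_le_neg (hh3 j e))
      linarith
  have hbalance : ∑ i, lam * (x i - xb i) = ∑ j, lam * (y j - yb j) := by
    simp only [← mul_sum, sum_sub_distrib]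
    rw [hbal, hbalb]
  linarith
end

section
/- Under the same setting, if a pair (x̄, λ̄) ∈ D(x̄) × ℝ^n satisfies ∃ p̄ ∈ P(x̄) with ∑_{i∈I} ⟨p̄^i − λ̄, y^i − x̄^i⟩ ≥ 0 for all y ∈ Y(x̄), then x̄ solves the QVI: ⟨p̄, y − x̄⟩ ≥ 0 for all y ∈ D(x̄). -/
open scoped RealInnerProductSpace

theorem sum_inner_sub_const_left_of_sum_eq_zero {𝕜 E ι : Type*} [RCLike 𝕜]
    [NormedAddCommGroup E] [InnerProductSpace 𝕜 E] (s : Finset ι) (p v : ι → E) (c : E)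
    (hv : ∑ i ∈ s, v i = 0) :
    ∑ i ∈ s, inner 𝕜 (p i - c) (v i) = ∑ i ∈ s, inner 𝕜 (p i) (v i) := by
  simp only [inner_sub_left]
  rw [Finset.sum_sub_distrib, ← inner_sum, hv, inner_zero_right, sub_zero]

theorem stmt_5_general {n : ℕ} {I : Type*} [Fintype I]
    (Y : I → (I → EuclideanSpace ℝ (Fin n)) → Set (EuclideanSpace ℝ (Fin n)))
    (xb : I → EuclideanSpace ℝ (Fin n))
    (hbal : ∑ i, xb i = 0)
    (pb : I → EuclideanSpace ℝ (Fin n)) (lam : EuclideanSpace ℝ (Fin n))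
    (hmult : ∀ y : I → EuclideanSpace ℝ (Fin n),
      (∀ i, y i ∈ Y i xb) → ∑ i, ⟪pb i - lam, y i - xb i⟫ ≥ 0) :
    ∀ y : I → EuclideanSpace ℝ (Fin n),
      (∑ i, y i = 0) → (∀ i, y i ∈ Y i xb) → ∑ i, ⟪pb i, y i - xb i⟫ ≥ 0 := by
  intro y hy hyY
  have hdisp : ∑ i, (y i - xb i) = 0 := by
    rw [Finset.sum_sub_distrib, hy, hbal, sub_zero]
  rw [← sum_inner_sub_const_left_of_sum_eq_zero _ _ _ lam hdisp]
  exact hmult y hyY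

/-- existence of a multiplier `λ̄` implies that `x̄` solves the QVI,
Prop 4.1 (b). -/
theorem stmt_5 {n : ℕ} {I : Type*} [Fintype I]
    (Y : I → (I → EuclideanSpace ℝ (Fin n)) → Set (EuclideanSpace ℝ (Fin n)))
    (hYne : ∀ i x, (Y i x).Nonempty) (hYcv : ∀ i x, Convex ℝ (Y i x))
    (hYcp : ∀ i x, IsCompact (Y i x))
    (xb : I → EuclideanSpace ℝ (Fin n))
    (hbal : ∑ i, xb i = 0) (hfeas : ∀ i, xb i ∈ Y i xb)
    (pb : I → EuclideanSpace ℝ (Fin n)) (lam : EuclideanSpace ℝ (Fin n))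
    (hmult : ∀ y : I → EuclideanSpace ℝ (Fin n),
      (∀ i, y i ∈ Y i xb) → ∑ i, ⟪pb i - lam, y i - xb i⟫ ≥ 0) :
    ∀ y : I → EuclideanSpace ℝ (Fin n),
      (∑ i, y i = 0) → (∀ i, y i ∈ Y i xb) → ∑ i, ⟪pb i, y i - xb i⟫ ≥ 0 :=
  stmt_5_general Y xb hbal pb lam hmult
end

section
/- Suppose: (C1) Ỹ_i ⊂ ℝ^n convex compact, Y_i(x) ⊆ Ỹ_i convex compact for all x; (C2) p^i(x) = p^i(x^i) is the unique solution of max_{p∈V_i}{⟨p, x^i⟩ − (β_i/2)‖p − v̄^i‖²} with V_i nonempty compact convex, so p : Ỹ → ℝ^{nm} is continuous; (C3) x ∈ Y(x) for all x ∈ D̃ where D̃ = {y ∈ Ỹ : ∑_i y^i = 0} is nonempty. Then the single-valued QVI has a solution: there exists x̄ ∈ D(x̄) = {y : ∑_i y^i = 0, y^i ∈ Y_i(x̄)} with ⟨p(x̄), y − x̄⟩ ≥ 0 for all y ∈ D(x̄). -/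
/-!
With `f_i(x) = max_{q ∈ V_i} ⟪q, x^i⟫ - (β_i/2)‖q - v̄^i‖²`, the price map is a subgradient
field of the convex potential `φ = ∑ i, f_i`: `φ w + ∑ i, ⟪p(w)^i, u^i - w^i⟫ ≤ φ u`.
A minimiser `x̄` of the continuous `φ` over the compact convex set `D̃` therefore satisfies
Minty's inequality `⟪p(w), w - x̄⟫ ≥ 0` on `D̃`, and by continuity of `p` along segments the
variational inequality `⟪p(x̄), y - x̄⟫ ≥ 0` on `D̃`. Since `x̄ ∈ Y(x̄)` by (C3) and
`D(x̄) ⊆ D̃`, `x̄` solves the quasi-variational inequality.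
-/

open scoped RealInnerProductSpace
open Set Filter

section Minty

variable {E : Type*} [AddCommGroup E] [Module ℝ E] [TopologicalSpace E]
  [ContinuousAdd E] [ContinuousSMul ℝ E]
  {K : Set E} {G : E → E →ₗ[ℝ] ℝ} {x : E}

theorem minty_variational_inequality (hK : Convex ℝ K) (hx : x ∈ K)
    (hG : ∀ d, Continuous fun w => G w d) (hminty : ∀ w ∈ K, 0 ≤ G w (w - x))
    {y : E} (hy : y ∈ K) : 0 ≤ G x (y - x) := by
  set h : ℝ → ℝ := fun t => G (x + t • (y - x)) (y - x)
  have hcont : Continuous h :=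
    (hG (y - x)).comp (continuous_const.add (continuous_id.smul continuous_const))
  have hpos : ∀ t ∈ Ioc (0 : ℝ) 1, 0 ≤ h t := by
    rintro t ⟨ht0, ht1⟩
    have hw := hminty _ (hK.add_smul_sub_mem hx hy ⟨ht0.le, ht1⟩)
    rw [add_sub_cancel_left, map_smul, smul_eq_mul] at hw
    exact nonneg_of_mul_nonneg_right hw ht0
  have h0 : 0 ≤ h 0 := ge_of_tendsto (hcont.tendsto 0 |>.mono_left nhdsWithin_le_nhds)
    (eventually_of_mem (Ioc_mem_nhdsGT zero_lt_one) hpos)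
  simpa [h] using h0

theorem IsMinOn.variational_inequality_of_subgradient {φ : E → ℝ} (hK : Convex ℝ K)
    (hx : x ∈ K) (hG : ∀ d, Continuous fun w => G w d)
    (hsub : ∀ w ∈ K, φ w + G w (x - w) ≤ φ x) (hmin : IsMinOn φ K x) {y : E} (hy : y ∈ K) :
    0 ≤ G x (y - x) := by
  refine minty_variational_inequality hK hx hG (fun w hw => ?_) hy
  have hφ : φ x ≤ φ w := hmin hw
  have := hsub w hw
  rw [← neg_sub, map_neg] at this
  linarith

end Minty

section Profiles

variable {I F : Type*} [Fintype I]

def balancedPi [AddCommMonoid F] (S : I → Set F) : Set (I → F) :=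
  univ.pi S ∩ {x | ∑ i, x i = 0}

theorem Convex.balancedPi [AddCommGroup F] [Module ℝ F] {S : I → Set F}
    (hS : ∀ i, Convex ℝ (S i)) : Convex ℝ (balancedPi S) := by
  refine (convex_pi fun i _ => hS i).inter fun x hx y hy a b _ _ _ => ?_
  simp_all [Finset.sum_add_distrib, ← Finset.smul_sum]

theorem IsCompact.balancedPi [AddCommMonoid F] [TopologicalSpace F] [ContinuousAdd F]
    [T2Space F] {S : I → Set F} (hS : ∀ i, IsCompact (S i)) : IsCompact (balancedPi S) :=
  (isCompact_univ_pi hS).inter_right (isClosed_eq (by fun_prop) continuous_const)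

end Profiles

section Pairing

variable {I F : Type*} [Fintype I] [NormedAddCommGroup F] [InnerProductSpace ℝ F]

noncomputable def sumInner (ξ : I → F) : (I → F) →ₗ[ℝ] ℝ :=
  ∑ i, (innerₗ F (ξ i)).comp (LinearMap.proj i)

@[simp]
theorem sumInner_apply (ξ d : I → F) : sumInner ξ d = ∑ i, ⟪ξ i, d i⟫ := by
  simp [sumInner]

theorem continuous_sumInner_apply {X : Type*} [TopologicalSpace X] {P : X → I → F}
    (hP : Continuous P) (d : I → F) : Continuous fun w => sumInner (P w) d := by
  simp only [sumInner_apply]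
  fun_prop

theorem add_sumInner_sub_le_of_isMaxOn {V : I → Set F} {c : I → F → ℝ}
    {P : (I → F) → I → F} (hPV : ∀ x i, P x i ∈ V i)
    (hmax : ∀ x i, IsMaxOn (fun q => ⟪q, x i⟫ - c i q) (V i) (P x i)) (u w : I → F) :
    ∑ i, (⟪P w i, w i⟫ - c i (P w i)) + sumInner (P w) (u - w) ≤
      ∑ i, (⟪P u i, u i⟫ - c i (P u i)) := by
  rw [sumInner_apply, ← Finset.sum_add_distrib]
  refine Finset.sum_le_sum fun i _ => ?_
  have : ⟪P w i, u i⟫ - c i (P w i) ≤ ⟪P u i, u i⟫ - c i (P u i) := hmax u i (hPV w i)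
  rw [Pi.sub_apply, inner_sub_right]
  linarith

end Pairing

theorem stmt_11_general {n : ℕ} {I : Type*} [Fintype I]
    -- (C1)
    (Yt : I → Set (EuclideanSpace ℝ (Fin n)))
    (hYtcv : ∀ i, Convex ℝ (Yt i)) (hYtcp : ∀ i, IsCompact (Yt i))
    (Y : I → (I → EuclideanSpace ℝ (Fin n)) → Set (EuclideanSpace ℝ (Fin n)))
    (hYsub : ∀ i x, Y i x ⊆ Yt i)
    -- (C2): p^i(x) = p^i(x^i) is the unique maximizer of the regularized problem
    (V : I → Set (EuclideanSpace ℝ (Fin n)))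
    (vbar : I → EuclideanSpace ℝ (Fin n)) (β : I → ℝ)
    (p : (I → EuclideanSpace ℝ (Fin n)) → I → EuclideanSpace ℝ (Fin n))
    (hpdef : ∀ x i, p x i ∈ V i ∧
      ∀ q ∈ V i, q ≠ p x i →
        ⟪q, x i⟫ - β i / 2 * ‖q - vbar i‖ ^ 2 <
          ⟪p x i, x i⟫ - β i / 2 * ‖p x i - vbar i‖ ^ 2)
    (hpcont : Continuous p)
    -- (C3): x ∈ Y(x) on the nonempty set D̃
    (hDtne : ∃ y : I → EuclideanSpace ℝ (Fin n), (∀ i, y i ∈ Yt i) ∧ ∑ i, y i = 0)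
    (hxY : ∀ x : I → EuclideanSpace ℝ (Fin n),
      (∀ i, x i ∈ Yt i) → (∑ i, x i = 0) → ∀ i, x i ∈ Y i x) :
    ∃ xb : I → EuclideanSpace ℝ (Fin n), (∑ i, xb i = 0) ∧ (∀ i, xb i ∈ Y i xb) ∧
      ∀ y : I → EuclideanSpace ℝ (Fin n), (∑ i, y i = 0) → (∀ i, y i ∈ Y i xb) →
        ∑ i, ⟪p xb i, y i - xb i⟫ ≥ 0 := by
  set c : I → EuclideanSpace ℝ (Fin n) → ℝ := fun i q => β i / 2 * ‖q - vbar i‖ ^ 2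
  have hmax : ∀ (x : I → EuclideanSpace ℝ (Fin n)) i,
      IsMaxOn (fun q => ⟪q, x i⟫ - c i q) (V i) (p x i) :=
    fun x i => isMaxOn_iff.2 fun q hq => by
    rcases eq_or_ne q (p x i) with rfl | hne
    · exact le_rfl
    · exact ((hpdef x i).2 q hq hne).le
  set φ := fun x : I → EuclideanSpace ℝ (Fin n) => ∑ i, (⟪p x i, x i⟫ - c i (p x i))
  have hφ : Continuous φ := by fun_prop
  obtain ⟨xb, hxbD, hmin⟩ := (IsCompact.balancedPi hYtcp).exists_isMinOn
    (hDtne.imp fun y hy => ⟨fun i _ => hy.1 i, hy.2⟩) hφ.continuousOn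
  have hxbY : ∀ i, xb i ∈ Y i xb := hxY xb (fun i => hxbD.1 i trivial) hxbD.2
  refine ⟨xb, hxbD.2, hxbY, fun y hy hyY => ?_⟩
  have hVI := hmin.variational_inequality_of_subgradient (Convex.balancedPi hYtcv) hxbD
    (continuous_sumInner_apply hpcont)
    (fun w _ => add_sumInner_sub_le_of_isMaxOn (fun x i => (hpdef x i).1) hmax xb w)
    ⟨fun i _ => hYsub i xb (hyY i), hy⟩
  simpa using hVI

/-- under (C1)–(C3) the single-valued market QVI (6.11) has a
solution (Prop 6.2). -/
theorem stmt_11 {n : ℕ} {I : Type*} [Fintype I]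
    -- (C1)
    (Yt : I → Set (EuclideanSpace ℝ (Fin n)))
    (hYtcv : ∀ i, Convex ℝ (Yt i)) (hYtcp : ∀ i, IsCompact (Yt i))
    (Y : I → (I → EuclideanSpace ℝ (Fin n)) → Set (EuclideanSpace ℝ (Fin n)))
    (hYsub : ∀ i x, Y i x ⊆ Yt i)
    (hYcv : ∀ i x, Convex ℝ (Y i x)) (hYcp : ∀ i x, IsCompact (Y i x))
    -- (C2): p^i(x) = p^i(x^i) is the unique maximizer of the regularized problem
    (V : I → Set (EuclideanSpace ℝ (Fin n)))
    (hVne : ∀ i, (V i).Nonempty) (hVcp : ∀ i, IsCompact (V i))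
    (hVcv : ∀ i, Convex ℝ (V i))
    (vbar : I → EuclideanSpace ℝ (Fin n)) (β : I → ℝ) (hβ : ∀ i, 0 < β i)
    (p : (I → EuclideanSpace ℝ (Fin n)) → I → EuclideanSpace ℝ (Fin n))
    (hpdef : ∀ x i, p x i ∈ V i ∧
      ∀ q ∈ V i, q ≠ p x i →
        ⟪q, x i⟫ - β i / 2 * ‖q - vbar i‖ ^ 2 <
          ⟪p x i, x i⟫ - β i / 2 * ‖p x i - vbar i‖ ^ 2)
    (hpcont : Continuous p)
    -- (C3): x ∈ Y(x) on the nonempty set D̃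
    (hDtne : ∃ y : I → EuclideanSpace ℝ (Fin n), (∀ i, y i ∈ Yt i) ∧ ∑ i, y i = 0)
    (hxY : ∀ x : I → EuclideanSpace ℝ (Fin n),
      (∀ i, x i ∈ Yt i) → (∑ i, x i = 0) → ∀ i, x i ∈ Y i x) :
    ∃ xb : I → EuclideanSpace ℝ (Fin n), (∑ i, xb i = 0) ∧ (∀ i, xb i ∈ Y i xb) ∧
      ∀ y : I → EuclideanSpace ℝ (Fin n), (∑ i, y i = 0) → (∀ i, y i ∈ Y i xb) →
        ∑ i, ⟪p xb i, y i - xb i⟫ ≥ 0 :=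
  stmt_11_general Yt hYtcv hYtcp Y hYsub V vbar β p hpdef hpcont hDtne hxY
end

section
/- Let D̃ ⊆ ℝ^N be nonempty compact, p : D̃ → ℝ^N continuous, D : D̃ → Π(D̃) lower semicontinuous with x ∈ D(x) for all x ∈ D̃. Let {w^(s)} ⊂ D̃ and δ_s → 0 with δ_s > 0 satisfy, for each s, ⟨p(w^(s)), y − w^(s)⟩ ≥ −δ_s for all y ∈ D(w^(s)). Then every limit point w̄ of {w^(s)} satisfies w̄ ∈ D(w̄) and ⟨p(w̄), y − w̄⟩ ≥ 0 for all y ∈ D(w̄), i.e., w̄ solves the quasi-variational inequality. -/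
open scoped RealInnerProductSpace

/-- Lower semicontinuity of a set-valued mapping on a set (Definition 2.1 (b)). -/
def SetLSCOn {X Z : Type*} [TopologicalSpace X] [TopologicalSpace Z]
    (G : X → Set Z) (W : Set X) : Prop :=
  ∀ v ∈ W, ∀ U : Set Z, IsOpen U → (U ∩ G v).Nonempty →
    ∃ V : Set X, IsOpen V ∧ v ∈ V ∧ ∀ w ∈ V ∩ W, (U ∩ G w).Nonempty

open Filter Topology Set

/- A limit point w̄ of approximate solutions lies in the closed set D̃, hence in D(w̄). For
y ∈ D(w̄), lower semicontinuity of D provides points y' ∈ D(w^(s)) arbitrarily close to y once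
w^(s) is close to w̄, and ⟨p(w^(s)), y' − w^(s)⟩ ≥ −δ_s passes to the limit by continuity of p. -/

section SetLSCOn

variable {ι X Z : Type*} [TopologicalSpace X] [TopologicalSpace Z]
  {G : X → Set Z} {W : Set X} {v : X} {y : Z}

theorem SetLSCOn.eventually_inter_nonempty (hG : SetLSCOn G W) (hv : v ∈ W) (hy : y ∈ G v)
    {U : Set Z} (hU : U ∈ 𝓝 y) {l : Filter ι} {z : ι → X} (hz : Tendsto z l (𝓝[W] v)) :
    ∀ᶠ t in l, (U ∩ G (z t)).Nonempty := by
  obtain ⟨U', hU'U, hU'open, hyU'⟩ := mem_nhds_iff.mp hU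
  obtain ⟨V, hVopen, hvV, hV⟩ := hG v hv U' hU'open ⟨y, hyU', hy⟩
  filter_upwards [hz (inter_mem_nhdsWithin W (hVopen.mem_nhds hvV))] with t ht
  exact (hV (z t) ⟨ht.2, ht.1⟩).mono (inter_subset_inter_left _ hU'U)

theorem SetLSCOn.le_of_tendsto (hG : SetLSCOn G W) (hv : v ∈ W) (hy : y ∈ G v)
    {F : X × Z → ℝ} (hF : ContinuousWithinAt F (W ×ˢ univ) (v, y))
    {l : Filter ι} [l.NeBot] {z : ι → X} {c : ι → ℝ} {a : ℝ}
    (hz : Tendsto z l (𝓝[W] v)) (hc : Tendsto c l (𝓝 a))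
    (hbound : ∀ᶠ t in l, ∀ y' ∈ G (z t), c t ≤ F (z t, y')) :
    a ≤ F (v, y) := by
  refine le_of_forall_pos_lt_add fun ε hε => ?_
  have hnear : {q | F q < F (v, y) + ε / 2} ∈ 𝓝[W] v ×ˢ 𝓝 y := by
    rw [← nhdsWithin_univ (a := y), ← nhdsWithin_prod_eq]
    exact hF (Iio_mem_nhds (by linarith))
  obtain ⟨A, hA, U, hU, hAU⟩ := mem_prod_iff.mp hnear
  obtain ⟨t, hzA, ⟨y', hy'U, hy'G⟩, hct, hbound⟩ :=
    ((hz.eventually hA).and <| (hG.eventually_inter_nonempty hv hy hU hz).and <|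
      (hc.eventually (Ioi_mem_nhds (show a - ε / 2 < a by linarith))).and hbound).exists
  have hFy' : F (z t, y') < F (v, y) + ε / 2 := hAU ⟨hzA, hy'U⟩
  linarith [hbound y' hy'G]

end SetLSCOn

theorem stmt_12_general {N : ℕ}
    (Dt : Set (EuclideanSpace ℝ (Fin N)))
    (hDtcp : IsCompact Dt)
    (p : EuclideanSpace ℝ (Fin N) → EuclideanSpace ℝ (Fin N))
    (hp : ContinuousOn p Dt)
    (D : EuclideanSpace ℝ (Fin N) → Set (EuclideanSpace ℝ (Fin N)))
    (hDlsc : SetLSCOn D Dt)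
    (hxD : ∀ x ∈ Dt, x ∈ D x)
    (w : ℕ → EuclideanSpace ℝ (Fin N)) (hw : ∀ s, w s ∈ Dt)
    (δ : ℕ → ℝ)
    (hδ : Filter.Tendsto δ Filter.atTop (nhds 0))
    (happrox : ∀ s, ∀ y ∈ D (w s), ⟪p (w s), y - w s⟫ ≥ -δ s)
    (wbar : EuclideanSpace ℝ (Fin N))
    (φ : ℕ → ℕ) (hφ : StrictMono φ)
    (hlim : Filter.Tendsto (w ∘ φ) Filter.atTop (nhds wbar)) :
    wbar ∈ D wbar ∧ ∀ y ∈ D wbar, ⟪p wbar, y - wbar⟫ ≥ 0 := by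
  have hwbar : wbar ∈ Dt := hDtcp.isClosed.mem_of_tendsto hlim (.of_forall fun t => hw (φ t))
  refine ⟨hxD wbar hwbar, fun y hy => ?_⟩
  have hz : Tendsto (w ∘ φ) atTop (𝓝[Dt] wbar) :=
    tendsto_nhdsWithin_iff.mpr ⟨hlim, .of_forall fun t => hw (φ t)⟩
  have hF : ContinuousWithinAt (fun q : _ × _ => ⟪p q.1, q.2 - q.1⟫) (Dt ×ˢ univ) (wbar, y) :=
    ((hp wbar hwbar).comp continuousWithinAt_fst fun _ hq => hq.1).inner
      (continuous_snd.sub continuous_fst).continuousWithinAt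
  have hc : Tendsto (fun t => -δ (φ t)) atTop (𝓝 0) := by
    simpa using (hδ.comp hφ.tendsto_atTop).neg
  exact hDlsc.le_of_tendsto hwbar hy hF hz hc (.of_forall fun t => happrox (φ t))

/-- limit points of approximate QVI solutions with vanishing
tolerances solve the QVI (core of Theorem 6.1 (ii)). -/
theorem stmt_12 {N : ℕ}
    (Dt : Set (EuclideanSpace ℝ (Fin N)))
    (hDtne : Dt.Nonempty) (hDtcp : IsCompact Dt)
    (p : EuclideanSpace ℝ (Fin N) → EuclideanSpace ℝ (Fin N))
    (hp : ContinuousOn p Dt)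
    (D : EuclideanSpace ℝ (Fin N) → Set (EuclideanSpace ℝ (Fin N)))
    (hDsub : ∀ x ∈ Dt, D x ⊆ Dt)
    (hDlsc : SetLSCOn D Dt)
    (hxD : ∀ x ∈ Dt, x ∈ D x)
    (w : ℕ → EuclideanSpace ℝ (Fin N)) (hw : ∀ s, w s ∈ Dt)
    (δ : ℕ → ℝ) (hδpos : ∀ s, 0 < δ s)
    (hδ : Filter.Tendsto δ Filter.atTop (nhds 0))
    (happrox : ∀ s, ∀ y ∈ D (w s), ⟪p (w s), y - w s⟫ ≥ -δ s)
    (wbar : EuclideanSpace ℝ (Fin N))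
    (φ : ℕ → ℕ) (hφ : StrictMono φ)
    (hlim : Filter.Tendsto (w ∘ φ) Filter.atTop (nhds wbar)) :
    wbar ∈ D wbar ∧ ∀ y ∈ D wbar, ⟪p wbar, y - wbar⟫ ≥ 0 :=
  stmt_12_general Dt hDtcp p hp D hDlsc hxD w hw δ hδ happrox wbar φ hφ hlim
end

section
/- Suppose D̃ ⊂ ℝ^N is nonempty convex compact, p : D̃ → ℝ^N is continuous, D : D̃ → Π(D̃) has nonempty convex compact values with x ∈ D(x), and Z(x) = argmin_{y ∈ D(x)} ⟨p(x), y⟩. Fix a stage s with tolerance δ_s > 0, β ∈ (0,1), and step-size parameters τ_{l,s} ∈ (0,1) with τ_{l,s} → 0 as l → ∞. Generate x^(k+1) = x^(k) + θ_k (y^(k) − x^(k)) with y^(k) ∈ Z(x^(k)), continuing while ⟨p(x^(k)), x^(k) − y^(k)⟩ ≥ δ_s, where θ_k is kept in [θ_{k-1}, τ_{l,s}] when the test ⟨p(x^(k)), d^(k-1)⟩ ≤ β⟨p(x^(k-1)), d^(k-1)⟩ passes and otherwise reduced below τ_{l+1,s} (incrementing l). Assume p is the gradient of a convex function η bounded below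 on D̃. Then the stage terminates after finitely many iterations, i.e., eventually ⟨p(x^(k)), x^(k) − y^(k)⟩ < δ_s. -/
open scoped RealInnerProductSpace

/-!
Suppose the stage never stops, so that `⟪p (x k), y k - x k⟫ ≤ -δ` for all `k`. If the
sufficient-decrease test failed infinitely often, the caps `τ (l k)`, hence the step sizes,
would tend to `0`; the steps `x (k + 1) - x k` would then vanish, and uniform continuity of `p`
on the compact set `Dt` would make `⟪p (x (k + 1)) - p (x k), y k - x k⟫` smaller than
`(1 - β) δ`, so that the test passes after all. Hence the test passes from some `K` on, the
step sizes never decrease after `K`, and the gradient inequality of the convex `η` gives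
`η (x (k + 1)) ≤ η (x k) - β θ_K δ` for `k ≥ K`, contradicting that `η` is bounded below on `Dt`.
-/

open Filter Topology Set Uniformity

section Gradient

variable {E : Type*} [NormedAddCommGroup E]

theorem ConvexOn.le_sub_of_hasFDerivAt [NormedSpace ℝ E] {s : Set E} {f : E → ℝ}
    {f' : E →L[ℝ] ℝ} {a b : E} (hf : ConvexOn ℝ s f) (ha : a ∈ s) (hb : b ∈ s)
    (hf' : HasFDerivAt f f' a) : f' (b - a) ≤ f b - f a := by
  have hline : HasDerivAt (f ∘ (AffineMap.lineMap a b : ℝ →ᵃ[ℝ] E)) (f' (b - a)) 0 := by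
    refine HasFDerivAt.comp_hasDerivAt (0 : ℝ) ?_ AffineMap.hasDerivAt_lineMap
    simpa using hf'
  have hconv := hf.comp_affineMap (AffineMap.lineMap a b : ℝ →ᵃ[ℝ] E)
  simpa [slope_def_field] using
    hconv.le_slope_of_hasDerivAt (x := 0) (y := 1) (by simpa using ha) (by simpa using hb)
      one_pos hline

variable [InnerProductSpace ℝ E] [CompleteSpace E]

theorem ConvexOn.inner_le_sub_of_hasGradientAt {s : Set E} {f : E → ℝ} {g a b : E}
    (hf : ConvexOn ℝ s f) (ha : a ∈ s) (hb : b ∈ s) (hg : HasGradientAt f g a) :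
    ⟪g, b - a⟫ ≤ f b - f a := by
  simpa using hf.le_sub_of_hasFDerivAt ha hb hg.hasFDerivAt

theorem ConvexOn.le_add_mul_inner_of_hasGradientAt {s : Set E} {f : E → ℝ} {g a d : E}
    {t : ℝ} (hf : ConvexOn ℝ s f) (ha : a ∈ s) (had : a + t • d ∈ s)
    (hg : HasGradientAt f g (a + t • d)) : f (a + t • d) ≤ f a + t * ⟪g, d⟫ := by
  have := hf.inner_le_sub_of_hasGradientAt had ha hg
  rw [show a - (a + t • d) = -(t • d) by abel, inner_neg_right, real_inner_smul_right] at this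
  linarith

end Gradient

theorem UniformContinuousOn.tendsto_dist_comp {α β ι : Type*} [PseudoMetricSpace α]
    [PseudoMetricSpace β] {f : α → β} {s : Set α} (hf : UniformContinuousOn f s)
    {l : Filter ι} {u v : ι → α} (hu : ∀ i, u i ∈ s) (hv : ∀ i, v i ∈ s)
    (huv : Tendsto (fun i => dist (u i) (v i)) l (𝓝 0)) :
    Tendsto (fun i => dist (f (u i)) (f (v i))) l (𝓝 0) := by
  have : Tendsto (fun i => (u i, v i)) l (𝓤 α ⊓ 𝓟 (s ×ˢ s)) :=
    tendsto_inf.2 ⟨tendsto_uniformity_iff_dist_tendsto_zero.2 huv,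
      tendsto_principal.2 (Eventually.of_forall fun i => ⟨hu i, hv i⟩)⟩
  exact tendsto_uniformity_iff_dist_tendsto_zero.1 (Tendsto.comp hf this)

theorem exists_lt_of_eventually_add_le {a : ℕ → ℝ} {ε : ℝ} (hε : 0 < ε)
    (h : ∀ᶠ k in atTop, a (k + 1) + ε ≤ a k) (C : ℝ) : ∃ k, a k < C := by
  obtain ⟨K, hK⟩ := eventually_atTop.1 h
  have hdecr : ∀ n : ℕ, a (K + n) + n * ε ≤ a K := by
    intro n
    induction n with
    | zero => simp
    | succ n ih =>
      have := hK (K + n) (Nat.le_add_right K n)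
      rw [← add_assoc]
      push_cast
      linarith
  obtain ⟨n, hn⟩ := exists_nat_gt ((a K - C) / ε)
  rw [div_lt_iff₀ hε] at hn
  exact ⟨K + n, by linarith [hdecr n]⟩

theorem Convex.iterate_mem {E : Type*} [AddCommGroup E] [Module ℝ E] {K : Set E}
    (hK : Convex ℝ K) {x y : ℕ → E} {θ : ℕ → ℝ} (hx0 : x 0 ∈ K)
    (hy : ∀ k, x k ∈ K → y k ∈ K) (hθ : ∀ k, θ k ∈ Icc 0 1)
    (hupd : ∀ k, x (k + 1) = x k + θ k • (y k - x k)) (k : ℕ) : x k ∈ K := by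
  induction k with
  | zero => exact hx0
  | succ k ih => exact hupd k ▸ hK.add_smul_sub_mem ih (hy k ih) (hθ k)

/-- `T k` is the sufficient-decrease test of iteration `k`; `τ (l k)` is the current cap on the
step size, and each failed test moves on to the next cap. -/
def StepSizeRule (T : ℕ → Prop) (τ θ : ℕ → ℝ) (l : ℕ → ℕ) : Prop :=
  ∀ k, (T k → θ (k + 1) ∈ Icc (θ k) (τ (l k)) ∧ l (k + 1) = l k) ∧
    (¬ T k → θ (k + 1) ∈ Ioc 0 (min (θ k) (τ (l k + 1))) ∧ l (k + 1) = l k + 1)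

namespace StepSizeRule

variable {T : ℕ → Prop} {τ θ : ℕ → ℝ} {l : ℕ → ℕ}

theorem mem_Ioc (h : StepSizeRule T τ θ l) (h0 : θ 0 ∈ Ioc 0 (τ (l 0))) (k : ℕ) :
    θ k ∈ Ioc 0 (τ (l k)) := by
  induction k with
  | zero => exact h0
  | succ k ih =>
    by_cases hT : T k
    · obtain ⟨hθ, hl⟩ := (h k).1 hT
      exact ⟨ih.1.trans_le hθ.1, hl ▸ hθ.2⟩
    · obtain ⟨hθ, hl⟩ := (h k).2 hT
      exact ⟨hθ.1, hl ▸ hθ.2.trans (min_le_right _ _)⟩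

theorem monotone (h : StepSizeRule T τ θ l) : Monotone l := by
  refine monotone_nat_of_le_succ fun k => ?_
  by_cases hT : T k
  · exact ((h k).1 hT).2.ge
  · exact ((h k).2 hT).2 ▸ Nat.le_succ _

theorem tendsto_atTop (h : StepSizeRule T τ θ l) (hT : ∃ᶠ k in atTop, ¬ T k) :
    Tendsto l atTop atTop := by
  refine tendsto_atTop_atTop_of_monotone h.monotone fun m => ?_
  induction m with
  | zero => exact ⟨0, Nat.zero_le _⟩
  | succ m ih =>
    obtain ⟨k, hk⟩ := ih
    obtain ⟨j, hkj, hj⟩ := (frequently_atTop.1 hT) k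
    exact ⟨j + 1, ((h j).2 hj).2 ▸ Nat.succ_le_succ (hk.trans (h.monotone hkj))⟩

theorem tendsto_zero (h : StepSizeRule T τ θ l) (h0 : θ 0 ∈ Ioc 0 (τ (l 0)))
    (hτ : Tendsto τ atTop (𝓝 0)) (hT : ∃ᶠ k in atTop, ¬ T k) : Tendsto θ atTop (𝓝 0) :=
  squeeze_zero (fun k => (h.mem_Ioc h0 k).1.le) (fun k => (h.mem_Ioc h0 k).2)
    (hτ.comp (h.tendsto_atTop hT))

theorem exists_pos_eventually_le (h : StepSizeRule T τ θ l) (h0 : θ 0 ∈ Ioc 0 (τ (l 0)))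
    (hT : ∀ᶠ k in atTop, T k) : ∃ c > 0, ∀ᶠ k in atTop, c ≤ θ k := by
  obtain ⟨K, hK⟩ := eventually_atTop.1 hT
  refine ⟨θ K, (h.mem_Ioc h0 K).1, eventually_atTop.2 ⟨K, fun k hk => ?_⟩⟩
  induction k, hk using Nat.le_induction with
  | base => exact le_rfl
  | succ k hk ih => exact ih.trans ((h k).1 (hK k hk)).1.1

end StepSizeRule

theorem eventually_inner_le_mul_of_tendsto_zero {E : Type*} [NormedAddCommGroup E]
    [InnerProductSpace ℝ E] {K : Set E} (hK : IsCompact K) {p : E → E} (hp : ContinuousOn p K)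
    {x y : ℕ → E} {θ : ℕ → ℝ} (hx : ∀ k, x k ∈ K) (hy : ∀ k, y k ∈ K)
    (hupd : ∀ k, x (k + 1) = x k + θ k • (y k - x k)) (hθ : Tendsto θ atTop (𝓝 0))
    {β δ : ℝ} (hβ : β < 1) (hδ : 0 < δ) (hdesc : ∀ k, ⟪p (x k), y k - x k⟫ ≤ -δ) :
    ∀ᶠ k in atTop, ⟪p (x (k + 1)), y k - x k⟫ ≤ β * ⟪p (x k), y k - x k⟫ := by
  set R := Metric.diam K
  have hR : ∀ k, ‖y k - x k‖ ≤ R := fun k =>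
    dist_eq_norm (y k) (x k) ▸ Metric.dist_le_diam_of_mem hK.isBounded (hy k) (hx k)
  have hstep : Tendsto (fun k => dist (x (k + 1)) (x k)) atTop (𝓝 0) := by
    refine squeeze_zero (fun k => dist_nonneg) (fun k => ?_) (by simpa using hθ.abs.mul_const R)
    rw [hupd, dist_eq_norm, add_sub_cancel_left, norm_smul, Real.norm_eq_abs]
    exact mul_le_mul_of_nonneg_left (hR k) (abs_nonneg _)
  have hpstep := (hK.uniformContinuousOn_of_continuous hp).tendsto_dist_comp
    (fun k => hx (k + 1)) hx hstep
  have hsmall : ∀ᶠ k in atTop, dist (p (x (k + 1))) (p (x k)) * R < (1 - β) * δ :=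
    (hpstep.mul_const R).eventually (gt_mem_nhds (by simpa using mul_pos (sub_pos.2 hβ) hδ))
  filter_upwards [hsmall] with k hk
  have hdiff : ⟪p (x (k + 1)) - p (x k), y k - x k⟫ ≤ dist (p (x (k + 1))) (p (x k)) * R := by
    rw [dist_eq_norm]
    exact (real_inner_le_norm _ _).trans
      (mul_le_mul_of_nonneg_left (hR k) (norm_nonneg _))
  rw [inner_sub_left] at hdiff
  nlinarith [hdesc k]

theorem stmt_14_general {N : ℕ}
    (Dt : Set (EuclideanSpace ℝ (Fin N)))
    (hDtcv : Convex ℝ Dt) (hDtcp : IsCompact Dt)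
    (p : EuclideanSpace ℝ (Fin N) → EuclideanSpace ℝ (Fin N))
    (hpcont : ContinuousOn p Dt)
    (D : EuclideanSpace ℝ (Fin N) → Set (EuclideanSpace ℝ (Fin N)))
    (hDsub : ∀ z ∈ Dt, D z ⊆ Dt)
    -- p is the gradient of a convex function η bounded below on D̃
    (η : EuclideanSpace ℝ (Fin N) → ℝ)
    (hη : ConvexOn ℝ Set.univ η) (hgrad : ∀ z, HasGradientAt η (p z) z)
    (hbdd : ∃ C : ℝ, ∀ z ∈ Dt, C ≤ η z)
    -- stage parameters
    (δ : ℝ) (hδ : 0 < δ) (β : ℝ) (hβ : β ∈ Set.Ioo (0 : ℝ) 1)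
    (τ : ℕ → ℝ) (hτ : ∀ l, τ l ∈ Set.Ioo (0 : ℝ) 1)
    (hτlim : Filter.Tendsto τ Filter.atTop (nhds 0))
    -- the generated sequences
    (x y : ℕ → EuclideanSpace ℝ (Fin N)) (θ : ℕ → ℝ) (l : ℕ → ℕ)
    (hx0 : x 0 ∈ Dt) (hl0 : l 0 = 0) (hθ0 : θ 0 ∈ Set.Ioc 0 (τ 0))
    (hy : ∀ k, y k ∈ D (x k) ∧ IsMinOn (fun z => ⟪p (x k), z⟫) (D (x k)) (y k))
    (hupd : ∀ k, x (k + 1) = x k + θ k • (y k - x k))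
    (hstep : ∀ k,
      (⟪p (x (k + 1)), y k - x k⟫ ≤ β * ⟪p (x k), y k - x k⟫ →
        θ (k + 1) ∈ Set.Icc (θ k) (τ (l k)) ∧ l (k + 1) = l k) ∧
      (¬ (⟪p (x (k + 1)), y k - x k⟫ ≤ β * ⟪p (x k), y k - x k⟫) →
        θ (k + 1) ∈ Set.Ioc 0 (min (θ k) (τ (l k + 1))) ∧ l (k + 1) = l k + 1)) :
    ∃ k, ⟪p (x k), x k - y k⟫ < δ := by
  by_contra! hstop
  have hdesc : ∀ k, ⟪p (x k), y k - x k⟫ ≤ -δ := fun k => by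
    rw [← neg_sub, inner_neg_right]
    linarith [hstop k]
  have hrule : StepSizeRule (fun k => ⟪p (x (k + 1)), y k - x k⟫ ≤ β * ⟪p (x k), y k - x k⟫)
      τ θ l := hstep
  have hθ0' : θ 0 ∈ Ioc 0 (τ (l 0)) := by rwa [hl0]
  have hx : ∀ k, x k ∈ Dt := hDtcv.iterate_mem hx0 (fun k hk => hDsub _ hk (hy k).1)
    (fun k => ⟨(hrule.mem_Ioc hθ0' k).1.le, (hrule.mem_Ioc hθ0' k).2.trans (hτ _).2.le⟩) hupd
  have hpass : ∀ᶠ k in atTop, ⟪p (x (k + 1)), y k - x k⟫ ≤ β * ⟪p (x k), y k - x k⟫ := by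
    by_contra hfail
    exact hfail <| eventually_inner_le_mul_of_tendsto_zero hDtcp hpcont hx
      (fun k => hDsub _ (hx k) (hy k).1) hupd
      (hrule.tendsto_zero hθ0' hτlim (not_eventually.1 hfail)) hβ.2 hδ hdesc
  obtain ⟨c, hc, hθc⟩ := hrule.exists_pos_eventually_le hθ0' hpass
  have hdecr : ∀ᶠ k in atTop, η (x (k + 1)) + β * c * δ ≤ η (x k) := by
    filter_upwards [hpass, hθc] with k hk hck
    have := hη.le_add_mul_inner_of_hasGradientAt (mem_univ _) (mem_univ _)
      (hupd k ▸ hgrad (x (k + 1)))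
    rw [← hupd k] at this
    have hθk := (hrule.mem_Ioc hθ0' k).1.le
    nlinarith [mul_le_mul_of_nonneg_left hk hθk,
      mul_le_mul_of_nonneg_left (hdesc k) (mul_nonneg hβ.1.le hθk),
      mul_le_mul_of_nonneg_right hck (mul_pos hβ.1 hδ).le]
  obtain ⟨C, hC⟩ := hbdd
  obtain ⟨k, hk⟩ := exists_lt_of_eventually_add_le (a := fun k => η (x k))
    (mul_pos (mul_pos hβ.1 hc) hδ) hdecr C
  exact (hC _ (hx k)).not_gt hk

/-- each stage of the parametric conditional gradient method (PCGM)
terminates after finitely many iterations (Prop 6.3): along the generated sequence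
the stopping test `⟨p(x^(k)), x^(k) − y^(k)⟩ < δ_s` eventually holds. -/
theorem stmt_14 {N : ℕ}
    (Dt : Set (EuclideanSpace ℝ (Fin N)))
    (hDtne : Dt.Nonempty) (hDtcv : Convex ℝ Dt) (hDtcp : IsCompact Dt)
    (p : EuclideanSpace ℝ (Fin N) → EuclideanSpace ℝ (Fin N))
    (hpcont : ContinuousOn p Dt)
    (D : EuclideanSpace ℝ (Fin N) → Set (EuclideanSpace ℝ (Fin N)))
    (hDsub : ∀ z ∈ Dt, D z ⊆ Dt)
    (hDne : ∀ z ∈ Dt, (D z).Nonempty) (hDcv : ∀ z ∈ Dt, Convex ℝ (D z))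
    (hDcp : ∀ z ∈ Dt, IsCompact (D z)) (hxD : ∀ z ∈ Dt, z ∈ D z)
    -- p is the gradient of a convex function η bounded below on D̃
    (η : EuclideanSpace ℝ (Fin N) → ℝ)
    (hη : ConvexOn ℝ Set.univ η) (hgrad : ∀ z, HasGradientAt η (p z) z)
    (hbdd : ∃ C : ℝ, ∀ z ∈ Dt, C ≤ η z)
    -- stage parameters
    (δ : ℝ) (hδ : 0 < δ) (β : ℝ) (hβ : β ∈ Set.Ioo (0 : ℝ) 1)
    (τ : ℕ → ℝ) (hτ : ∀ l, τ l ∈ Set.Ioo (0 : ℝ) 1)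
    (hτlim : Filter.Tendsto τ Filter.atTop (nhds 0))
    -- the generated sequences
    (x y : ℕ → EuclideanSpace ℝ (Fin N)) (θ : ℕ → ℝ) (l : ℕ → ℕ)
    (hx0 : x 0 ∈ Dt) (hl0 : l 0 = 0) (hθ0 : θ 0 ∈ Set.Ioc 0 (τ 0))
    (hy : ∀ k, y k ∈ D (x k) ∧ IsMinOn (fun z => ⟪p (x k), z⟫) (D (x k)) (y k))
    (hupd : ∀ k, x (k + 1) = x k + θ k • (y k - x k))
    (hstep : ∀ k,
      (⟪p (x (k + 1)), y k - x k⟫ ≤ β * ⟪p (x k), y k - x k⟫ →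
        θ (k + 1) ∈ Set.Icc (θ k) (τ (l k)) ∧ l (k + 1) = l k) ∧
      (¬ (⟪p (x (k + 1)), y k - x k⟫ ≤ β * ⟪p (x k), y k - x k⟫) →
        θ (k + 1) ∈ Set.Ioc 0 (min (θ k) (τ (l k + 1))) ∧ l (k + 1) = l k + 1)) :
    ∃ k, ⟪p (x k), x k - y k⟫ < δ :=
  stmt_14_general Dt hDtcv hDtcp p hpcont D hDsub η hη hgrad hbdd δ hδ β hβ τ hτ hτlim x y θ l hx0
    hl0 hθ0 hy hupd hstep
end
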